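/- arXiv:2605.06845 — 5 statements merged into one kernel-verified Lean document; each statement's English description precedes it below -/
import Mathlib

section
/- Let d ≥ 1 be an integer and let Σ and Σ' be real symmetric positive-semidefinite d×d matrices. Then for every ξ ∈ ℝ^d, | exp(−√(ξᵀΣ'ξ)) − exp(−√(ξᵀΣξ)) | ≤ max( exp(−√(ξᵀΣξ)), exp(−√(ξᵀΣ'ξ)) ) · ‖Σ' − Σ‖_op^{1/2} · ‖ξ‖. -/
/-!
The map `t ↦ exp (-t)` is Lipschitz on `[s, t]` with constant `exp (-min s t)`, the square root is
`1/2`-Hölder (`|√p - √q| ≤ √|p - q|`), and the quadratic forms differ by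
`|ξᵀ(Σ' - Σ)ξ| ≤ ‖Σ' - Σ‖_op ‖ξ‖²`. Chaining the three bounds gives the estimate.
-/

noncomputable section

abbrev Euc (d : ℕ) : Type := EuclideanSpace ℝ (Fin d)

noncomputable def opNorm {d : ℕ} (A : Matrix (Fin d) (Fin d) ℝ) : ℝ :=
  ‖LinearMap.toContinuousLinearMap (Matrix.toEuclideanLin A)‖

def quadForm {d : ℕ} (A : Matrix (Fin d) (Fin d) ℝ) (x : Euc d) : ℝ :=
  ∑ i, ∑ j, x i * A i j * x j

namespace Real

theorem abs_exp_neg_sub_exp_neg_le (s t : ℝ) :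
    |exp (-t) - exp (-s)| ≤ max (exp (-s)) (exp (-t)) * |t - s| := by
  wlog hst : s ≤ t generalizing s t
  · simpa only [abs_sub_comm, max_comm] using this t s (le_of_not_ge hst)
  have h_factor : exp (-t) = exp (-s) * exp (-(t - s)) := by rw [← exp_add]; ring_nf
  have h_tangent : -(t - s) + 1 ≤ exp (-(t - s)) := add_one_le_exp _
  have h_anti : exp (-t) ≤ exp (-s) := exp_le_exp.2 (by linarith)
  calc |exp (-t) - exp (-s)| = exp (-s) - exp (-t) := by rw [abs_of_nonpos (by linarith), neg_sub]
    _ ≤ exp (-s) * (t - s) := by nlinarith [exp_pos (-s)]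
    _ ≤ max (exp (-s)) (exp (-t)) * |t - s| := by
      rw [abs_of_nonneg (by linarith)]
      exact mul_le_mul_of_nonneg_right (le_max_left _ _) (by linarith)

theorem abs_sqrt_sub_sqrt_le {p q : ℝ} (hp : 0 ≤ p) (hq : 0 ≤ q) :
    |√p - √q| ≤ √|p - q| := by
  wlog hqp : q ≤ p generalizing p q
  · simpa only [abs_sub_comm] using this hq hp (le_of_not_ge hqp)
  rw [abs_of_nonneg (sub_nonneg.2 (sqrt_le_sqrt hqp)), abs_of_nonneg (sub_nonneg.2 hqp)]
  nlinarith [sq_sqrt (sub_nonneg.2 hqp), sq_sqrt hq, sq_sqrt hp, sqrt_nonneg (p - q),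
    sqrt_nonneg q, sqrt_nonneg p, mul_nonneg (sqrt_nonneg (p - q)) (sqrt_nonneg q)]

end Real

section QuadForm

variable {d : ℕ}

theorem quadForm_eq_inner (A : Matrix (Fin d) (Fin d) ℝ) (x : Euc d) :
    quadForm A x = inner ℝ x (Matrix.toEuclideanLin A x) := by
  simp only [quadForm, Matrix.toEuclideanLin, Matrix.toLpLin_apply, PiLp.inner_apply,
    RCLike.inner_apply, conj_trivial, Matrix.mulVec, dotProduct, Finset.sum_mul]
  exact Finset.sum_congr rfl fun i _ => Finset.sum_congr rfl fun j _ => by ring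

theorem quadForm_nonneg {A : Matrix (Fin d) (Fin d) ℝ} (hA : A.PosSemidef) (x : Euc d) :
    0 ≤ quadForm A x := by
  have h := hA.dotProduct_mulVec_nonneg x
  simpa only [quadForm, dotProduct, Matrix.mulVec, Pi.star_apply, star_trivial, Finset.mul_sum,
    mul_assoc] using h

theorem quadForm_sub (A B : Matrix (Fin d) (Fin d) ℝ) (x : Euc d) :
    quadForm (B - A) x = quadForm B x - quadForm A x := by
  simp [quadForm, mul_sub, sub_mul, Finset.sum_sub_distrib]

theorem abs_quadForm_le (A : Matrix (Fin d) (Fin d) ℝ) (x : Euc d) :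
    |quadForm A x| ≤ opNorm A * ‖x‖ ^ 2 := by
  rw [quadForm_eq_inner]
  calc |inner ℝ x (Matrix.toEuclideanLin A x)| ≤ ‖x‖ * ‖Matrix.toEuclideanLin A x‖ :=
        abs_real_inner_le_norm _ _
    _ ≤ ‖x‖ * (opNorm A * ‖x‖) := by
        gcongr
        exact (LinearMap.toContinuousLinearMap (Matrix.toEuclideanLin A)).le_opNorm x
    _ = opNorm A * ‖x‖ ^ 2 := by ring

theorem sqrt_abs_quadForm_le (A : Matrix (Fin d) (Fin d) ℝ) (x : Euc d) :
    √|quadForm A x| ≤ opNorm A ^ ((1 : ℝ) / 2) * ‖x‖ :=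
  calc √|quadForm A x| ≤ √(opNorm A * ‖x‖ ^ 2) := Real.sqrt_le_sqrt (abs_quadForm_le A x)
    _ = opNorm A ^ ((1 : ℝ) / 2) * ‖x‖ := by
      rw [Real.sqrt_mul (x := opNorm A) (norm_nonneg _), Real.sqrt_sq (norm_nonneg x),
        Real.sqrt_eq_rpow]

end QuadForm

theorem cauchy_charfun_scale_estimate_general
    (d : ℕ) (A B : Matrix (Fin d) (Fin d) ℝ)
    (hA : A.PosSemidef) (hB : B.PosSemidef) (ξ : Euc d) :
    |Real.exp (-Real.sqrt (quadForm B ξ)) - Real.exp (-Real.sqrt (quadForm A ξ))| ≤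
      max (Real.exp (-Real.sqrt (quadForm A ξ))) (Real.exp (-Real.sqrt (quadForm B ξ))) *
        opNorm (B - A) ^ ((1 : ℝ) / 2) * ‖ξ‖ := by
  set M := max (Real.exp (-√(quadForm A ξ))) (Real.exp (-√(quadForm B ξ)))
  have hM : 0 ≤ M := le_max_of_le_left (Real.exp_pos _).le
  calc _ ≤ M * |√(quadForm B ξ) - √(quadForm A ξ)| := Real.abs_exp_neg_sub_exp_neg_le _ _
    _ ≤ M * √|quadForm B ξ - quadForm A ξ| := by
      gcongr
      exact Real.abs_sqrt_sub_sqrt_le (quadForm_nonneg hB ξ) (quadForm_nonneg hA ξ)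
    _ ≤ M * (opNorm (B - A) ^ ((1 : ℝ) / 2) * ‖ξ‖) := by
      rw [← quadForm_sub]
      gcongr
      exact sqrt_abs_quadForm_le (B - A) ξ
    _ = M * opNorm (B - A) ^ ((1 : ℝ) / 2) * ‖ξ‖ := by ring

/-- Assumption 2 for the Cauchy kernel: Hölder-type estimate for
the Cauchy characteristic functions in the scale matrix. -/
theorem cauchy_charfun_scale_estimate
    (d : ℕ) (hd : 1 ≤ d) (A B : Matrix (Fin d) (Fin d) ℝ)
    (hA : A.PosSemidef) (hB : B.PosSemidef) (ξ : Euc d) :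
    |Real.exp (-Real.sqrt (quadForm B ξ)) - Real.exp (-Real.sqrt (quadForm A ξ))| ≤
      max (Real.exp (-Real.sqrt (quadForm A ξ))) (Real.exp (-Real.sqrt (quadForm B ξ))) *
        opNorm (B - A) ^ ((1 : ℝ) / 2) * ‖ξ‖ :=
  cauchy_charfun_scale_estimate_general d A B hA hB ξ
end
end

section
/- For all Borel probability measures P, P' on ℝ supported in [−R, R] and all scales σ, σ' with λmin ≤ σ ≤ σ' ≤ λmax, one has ∫_ℝ |p_{P,σ}(x) − p_{P',σ'}(x)| dx ≥ (σ' − σ)² / (6λmax² + 4R²). -/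
open MeasureTheory

noncomputable section

/-- The univariate Cauchy density with location θ and scale σ. -/
noncomputable def cauchyDens (θ σ x : ℝ) : ℝ :=
  σ / (Real.pi * (σ ^ 2 + (x - θ) ^ 2))

/-- Univariate Cauchy mixture density. -/
noncomputable def cauchyMix1 (P : Measure ℝ) (σ : ℝ) : ℝ → ℝ :=
  fun x => ∫ θ, cauchyDens θ σ x ∂P

/-! Testing the difference of the two mixtures against `x ↦ cos (t x)` bounds their L¹ distance
from below. By Fourier inversion of `e^{-c|x|}`, the Cauchy kernel of scale `σ` has characteristic
function `e^{-σ|t|}`, so the test integral is `e^{-σ|t|} φ_P(t) - e^{-σ'|t|} φ_{P'}(t)`, where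
`φ_Q(t) = ∫ cos (t θ) dQ`. Support in `[-R, R]` gives `φ_P(t) ≥ 1 - t²R²/2`, and `φ_{P'} ≤ 1`.
At `t = (σ' - σ) / (3 λmax² + 2 R²)` the first-order gain `(σ' - σ) t` of `e^{-σ t} - e^{-σ' t}`
dominates the second-order losses. -/

open Real FourierTransform Set

lemma cauchyDens_eq_cauchyPDFReal (θ : ℝ) {σ : ℝ} (hσ : 0 ≤ σ) :
    cauchyDens θ σ = ProbabilityTheory.cauchyPDFReal θ σ.toNNReal := by
  ext x
  rw [cauchyDens, ProbabilityTheory.cauchyPDFReal_def, Real.coe_toNNReal σ hσ]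
  field_simp
  ring

lemma cauchyDens_nonneg (θ : ℝ) {σ : ℝ} (hσ : 0 ≤ σ) (x : ℝ) : 0 ≤ cauchyDens θ σ x := by
  unfold cauchyDens; positivity

lemma integrable_cauchyDens (θ : ℝ) {σ : ℝ} (hσ : 0 ≤ σ) : Integrable (cauchyDens θ σ) := by
  rw [cauchyDens_eq_cauchyPDFReal θ hσ]
  exact ProbabilityTheory.integrable_cauchyPDFReal θ

lemma integral_cauchyDens (θ : ℝ) {σ : ℝ} (hσ : 0 < σ) : ∫ x, cauchyDens θ σ x = 1 := by
  rw [cauchyDens_eq_cauchyPDFReal θ hσ.le]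
  exact ProbabilityTheory.integral_cauchyPDFReal_eq_one θ (by simpa using hσ)

lemma integrable_exp_neg_mul_abs {c : ℝ} (hc : 0 < c) :
    Integrable fun x : ℝ => exp (-(c * |x|)) := by
  rw [← integrableOn_univ, ← Iic_union_Ioi (a := 0), integrableOn_union]
  constructor
  · refine (integrableOn_exp_mul_Iic hc 0).congr_fun (fun x hx => ?_) measurableSet_Iic
    rw [abs_of_nonpos hx]; ring_nf
  · refine (integrableOn_exp_mul_Ioi (neg_neg_of_pos hc) 0).congr_fun (fun x hx => ?_)
      measurableSet_Ioi
    rw [abs_of_pos hx]; ring_nf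

lemma fourier_exp_neg_mul_abs {c : ℝ} (hc : 0 < c) (w : ℝ) :
    𝓕 (fun x : ℝ => (exp (-(c * |x|)) : ℂ)) w =
      ((2 * c / (c ^ 2 + (2 * π * w) ^ 2) : ℝ) : ℂ) := by
  set F : ℝ → ℂ := fun v => Complex.exp (↑(-2 * π * v * w) * Complex.I) • (exp (-(c * |v|)) : ℂ)
  set a : ℂ := c + 2 * π * w * Complex.I
  set b : ℂ := c - 2 * π * w * Complex.I
  have ha : 0 < a.re := by simpa [a] using hc
  have hb : 0 < b.re := by simpa [b] using hc
  have hF : Integrable F :=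
    (integrable_exp_neg_mul_abs hc).ofReal.bdd_mul (c := 1) (by fun_prop)
      (ae_of_all _ fun v => (Complex.norm_exp_ofReal_mul_I _).le)
  have hIic : ∫ v in Iic (0 : ℝ), F v = 1 / b := by
    have h := integral_exp_mul_complex_Iic hb 0
    simp only [Complex.ofReal_zero, mul_zero, Complex.exp_zero] at h
    rw [← h]
    refine setIntegral_congr_fun measurableSet_Iic fun v hv => ?_
    simp only [F, abs_of_nonpos (show v ≤ 0 from hv), smul_eq_mul, Complex.ofReal_exp,
      ← Complex.exp_add, b]
    push_cast; ring_nf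
  have hIoi : ∫ v in Ioi (0 : ℝ), F v = 1 / a := by
    have h := integral_exp_mul_complex_Ioi (a := -a) (by simpa using ha) 0
    simp only [Complex.ofReal_zero, mul_zero, Complex.exp_zero, div_neg, neg_div, neg_neg] at h
    rw [← h]
    refine setIntegral_congr_fun measurableSet_Ioi fun v hv => ?_
    simp only [F, abs_of_pos (show 0 < v from hv), smul_eq_mul, Complex.ofReal_exp,
      ← Complex.exp_add, a]
    push_cast; ring_nf
  have ha0 : a ≠ 0 := fun h => by simp [h] at ha
  have hb0 : b ≠ 0 := fun h => by simp [h] at hb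
  have hab : a * b = ((c ^ 2 + (2 * π * w) ^ 2 : ℝ) : ℂ) := by
    simp only [a, b]; push_cast
    linear_combination (-(2 * π * w) ^ 2 : ℂ) * Complex.I_sq
  rw [Real.fourier_real_eq_integral_exp_smul, ← intervalIntegral.integral_Iic_add_Ioi
    hF.integrableOn hF.integrableOn, hIic, hIoi, div_add_div _ _ hb0 ha0, mul_comm b a, hab]
  push_cast; ring

lemma fourierInv_cauchyDens {σ : ℝ} (hσ : 0 < σ) :
    𝓕⁻ (fun x : ℝ => (cauchyDens 0 σ x : ℂ)) = fun x => (exp (-(2 * π * σ * |x|)) : ℂ) := by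
  have hc : 0 < 2 * π * σ := by positivity
  have hF : 𝓕 (fun x : ℝ => (exp (-(2 * π * σ * |x|)) : ℂ)) =
      fun w => (cauchyDens 0 σ w : ℂ) := by
    ext w
    rw [fourier_exp_neg_mul_abs hc, cauchyDens]
    congr 1
    field_simp
    ring
  rw [← hF]
  exact Continuous.fourierInv_fourier_eq (by fun_prop) (integrable_exp_neg_mul_abs hc).ofReal
    (hF ▸ (integrable_cauchyDens 0 hσ.le).ofReal)

lemma integral_cexp_mul_cauchyDens_zero {σ : ℝ} (hσ : 0 < σ) (t : ℝ) :
    ∫ x : ℝ, Complex.exp (↑(t * x) * Complex.I) * cauchyDens 0 σ x = exp (-(σ * |t|)) := by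
  have h := congrFun (fourierInv_cauchyDens hσ) (t / (2 * π))
  have h2π : 2 * π * σ * |t / (2 * π)| = σ * |t| := by
    rw [abs_div, abs_of_pos (by positivity : (0 : ℝ) < 2 * π)]
    field_simp
  rw [Real.fourierInv_eq', h2π] at h
  rw [← h]
  congr with x
  rw [smul_eq_mul, inner_apply]
  congr 3
  field_simp

lemma integral_cexp_mul_cauchyDens (θ : ℝ) {σ : ℝ} (hσ : 0 < σ) (t : ℝ) :
    ∫ x : ℝ, Complex.exp (↑(t * x) * Complex.I) * cauchyDens θ σ x =
      Complex.exp (↑(t * θ) * Complex.I) * exp (-(σ * |t|)) := by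
  let g : ℝ → ℂ := fun u => Complex.exp (↑(t * (u + θ)) * Complex.I) * cauchyDens 0 σ u
  calc ∫ x : ℝ, Complex.exp (↑(t * x) * Complex.I) * cauchyDens θ σ x
      = ∫ x : ℝ, g (x - θ) := by simp [g, cauchyDens]
    _ = ∫ u : ℝ, Complex.exp (↑(t * θ) * Complex.I) *
          (Complex.exp (↑(t * u) * Complex.I) * cauchyDens 0 σ u) := by
        rw [integral_sub_right_eq_self g θ]
        congr with u
        rw [← mul_assoc, ← Complex.exp_add]
        simp only [g]
        push_cast
        ring_nf
    _ = _ := by rw [integral_const_mul, integral_cexp_mul_cauchyDens_zero hσ]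

lemma integrable_cexp_mul_cauchyDens (θ : ℝ) {σ : ℝ} (hσ : 0 ≤ σ) (t : ℝ) :
    Integrable fun x : ℝ => Complex.exp (↑(t * x) * Complex.I) * cauchyDens θ σ x :=
  (integrable_cauchyDens θ hσ).ofReal.bdd_mul (c := 1) (by fun_prop)
    (ae_of_all _ fun x => (Complex.norm_exp_ofReal_mul_I _).le)

lemma integral_cos_mul_cauchyDens (θ : ℝ) {σ : ℝ} (hσ : 0 < σ) (t : ℝ) :
    ∫ x, cos (t * x) * cauchyDens θ σ x = exp (-(σ * |t|)) * cos (t * θ) := by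
  have h := congrArg Complex.re (integral_cexp_mul_cauchyDens θ hσ t)
  rw [← RCLike.re_to_complex, ← integral_re (integrable_cexp_mul_cauchyDens θ hσ.le t)] at h
  simp only [RCLike.re_to_complex, Complex.mul_re, Complex.exp_ofReal_mul_I_re,
    Complex.exp_ofReal_mul_I_im, Complex.ofReal_re, Complex.ofReal_im, mul_zero, sub_zero] at h
  rw [h, mul_comm]

section Mixture

variable {P : Measure ℝ} [IsFiniteMeasure P] {σ : ℝ}

lemma integrable_cauchyDens_prod (hσ : 0 < σ) :
    Integrable (fun p : ℝ × ℝ => cauchyDens p.1 σ p.2) (P.prod volume) := by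
  have hmeas : AEStronglyMeasurable (fun p : ℝ × ℝ => cauchyDens p.1 σ p.2) (P.prod volume) :=
    Measurable.aestronglyMeasurable (by unfold cauchyDens; fun_prop)
  refine (integrable_prod_iff hmeas).2 ⟨ae_of_all _ fun θ => integrable_cauchyDens θ hσ.le, ?_⟩
  simp only [Real.norm_of_nonneg (cauchyDens_nonneg _ hσ.le _), integral_cauchyDens _ hσ]
  exact integrable_const 1

lemma integrable_cauchyMix1 (hσ : 0 < σ) : Integrable (cauchyMix1 P σ) :=
  (integrable_cauchyDens_prod (P := P) hσ).integral_prod_right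

lemma integral_cos_mul_cauchyMix1 (hσ : 0 < σ) (t : ℝ) :
    ∫ x, cos (t * x) * cauchyMix1 P σ x = exp (-(σ * |t|)) * ∫ θ, cos (t * θ) ∂P := by
  have hint :
      Integrable (fun p : ℝ × ℝ => cos (t * p.2) * cauchyDens p.1 σ p.2) (P.prod volume) :=
    (integrable_cauchyDens_prod hσ).bdd_mul (c := 1) (by fun_prop)
      (ae_of_all _ fun p => abs_cos_le_one _)
  calc ∫ x, cos (t * x) * cauchyMix1 P σ x
      = ∫ x, ∫ θ, cos (t * x) * cauchyDens θ σ x ∂P := by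
        simp_rw [cauchyMix1, integral_const_mul]
    _ = ∫ θ, (∫ x, cos (t * x) * cauchyDens θ σ x) ∂P := (integral_integral_swap hint).symm
    _ = ∫ θ, exp (-(σ * |t|)) * cos (t * θ) ∂P := by simp_rw [integral_cos_mul_cauchyDens _ hσ]
    _ = _ := integral_const_mul _ _

end Mixture

lemma integral_mul_le_integral_abs {α : Type*} [MeasurableSpace α] {μ : Measure α} {f g : α → ℝ}
    (hf : Integrable f μ) (hg : AEStronglyMeasurable g μ) (hg1 : ∀ x, |g x| ≤ 1) :
    ∫ x, g x * f x ∂μ ≤ ∫ x, |f x| ∂μ :=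
  integral_mono (hf.bdd_mul hg (ae_of_all _ hg1)) hf.abs fun x =>
    (le_abs_self _).trans (by rw [abs_mul]; exact mul_le_of_le_one_left (abs_nonneg _) (hg1 x))

lemma exp_mul_integral_cos_sub_le_integral_abs_sub {P P' : Measure ℝ} [IsFiniteMeasure P]
    [IsFiniteMeasure P'] {σ σ' : ℝ} (hσ : 0 < σ) (hσ' : 0 < σ') (t : ℝ) :
    exp (-(σ * |t|)) * ∫ θ, cos (t * θ) ∂P - exp (-(σ' * |t|)) * ∫ θ, cos (t * θ) ∂P' ≤
      ∫ x, |cauchyMix1 P σ x - cauchyMix1 P' σ' x| := by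
  have hp := integrable_cauchyMix1 (P := P) hσ
  have hp' := integrable_cauchyMix1 (P := P') hσ'
  rw [← integral_cos_mul_cauchyMix1 hσ, ← integral_cos_mul_cauchyMix1 hσ',
    ← integral_sub (hp.bdd_mul (c := 1) (by fun_prop) (ae_of_all _ fun x => abs_cos_le_one _))
      (hp'.bdd_mul (c := 1) (by fun_prop) (ae_of_all _ fun x => abs_cos_le_one _))]
  simp_rw [← mul_sub]
  exact integral_mul_le_integral_abs (hp.sub hp') (by fun_prop) fun x => abs_cos_le_one _

lemma integrable_cos_mul (μ : Measure ℝ) [IsFiniteMeasure μ] (t : ℝ) :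
    Integrable (fun θ => cos (t * θ)) μ :=
  .of_bound (by fun_prop) 1 (ae_of_all _ fun θ => abs_cos_le_one _)

lemma one_sub_sq_mul_sq_div_two_le_integral_cos {P : Measure ℝ} [IsProbabilityMeasure P] {R : ℝ}
    (hP : P (Icc (-R) R)ᶜ = 0) (t : ℝ) : 1 - t ^ 2 * R ^ 2 / 2 ≤ ∫ θ, cos (t * θ) ∂P := by
  have hbound : ∀ᵐ θ ∂P, 1 - t ^ 2 * R ^ 2 / 2 ≤ cos (t * θ) := by
    filter_upwards [measure_eq_zero_iff_ae_notMem.1 hP] with θ hθ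
    have hθR : θ ^ 2 ≤ R ^ 2 := sq_le_sq' (not_not.1 hθ).1 (not_not.1 hθ).2
    nlinarith [one_sub_sq_div_two_le_cos (x := t * θ), sq_nonneg t]
  simpa using integral_mono_ae (integrable_const _) (integrable_cos_mul P t) hbound

lemma integral_cos_le_one {P : Measure ℝ} [IsProbabilityMeasure P] (t : ℝ) :
    ∫ θ, cos (t * θ) ∂P ≤ 1 := by
  simpa using integral_mono (integrable_cos_mul P t) (integrable_const 1) fun θ => cos_le_one _

lemma exp_neg_le_one_sub_add_sq_div_two {u : ℝ} (hu : 0 ≤ u) : exp (-u) ≤ 1 - u + u ^ 2 / 2 := by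
  rw [exp_neg, inv_le_iff_one_le_mul₀ (exp_pos u)]
  have hq : 0 ≤ 1 - u + u ^ 2 / 2 := by nlinarith [sq_nonneg (u - 1)]
  -- the product below is `1 + u ^ 4 / 4`
  calc (1 : ℝ) ≤ (1 - u + u ^ 2 / 2) * (1 + u + u ^ 2 / 2) := by nlinarith [pow_nonneg hu 4]
    _ ≤ (1 - u + u ^ 2 / 2) * exp u := mul_le_mul_of_nonneg_left (quadratic_le_exp_of_nonneg hu) hq

lemma sub_sq_div_le_exp_mul_sub_exp {σ σ' L R t : ℝ} (hσ : 0 < σ) (hσσ' : σ ≤ σ') (hσ'L : σ' ≤ L)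
    (ht : t = (σ' - σ) / (3 * L ^ 2 + 2 * R ^ 2)) :
    (σ' - σ) ^ 2 / (6 * L ^ 2 + 4 * R ^ 2) ≤
      exp (-(σ * t)) * (1 - t ^ 2 * R ^ 2 / 2) - exp (-(σ' * t)) := by
  set δ := σ' - σ with hδ_def
  set K := 3 * L ^ 2 + 2 * R ^ 2 with hK_def
  have hδ : 0 ≤ δ := sub_nonneg.2 hσσ'
  have hL : 0 < L := by linarith
  have hK : 0 < K := by positivity
  have htK : t * K = δ := by rw [ht]; field_simp
  have ht0 : 0 ≤ t := by rw [ht]; positivity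
  have hσt : σ * t ≤ 1 / 3 := by
    have : σ * δ ≤ L ^ 2 := by nlinarith
    rw [← htK] at this
    nlinarith [sq_nonneg R]
  have hfirst : 2 / 3 ≤ exp (-(σ * t)) := by linarith [one_sub_le_exp_neg (σ * t)]
  have hsecond : 3 * δ ^ 2 / (4 * K) ≤ 1 - t ^ 2 * R ^ 2 / 2 - exp (-(δ * t)) := by
    have hδK : 2 * (δ ^ 2 + R ^ 2) ≤ K := by nlinarith
    have hquad := exp_neg_le_one_sub_add_sq_div_two (mul_nonneg hδ ht0)
    rw [div_le_iff₀ (by positivity)]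
    nlinarith [mul_le_mul_of_nonneg_left hδK (by positivity : 0 ≤ K * t ^ 2)]
  have hsplit : exp (-(σ' * t)) = exp (-(σ * t)) * exp (-(δ * t)) := by
    rw [← exp_add, hδ_def]; ring_nf
  calc (σ' - σ) ^ 2 / (6 * L ^ 2 + 4 * R ^ 2) = 2 / 3 * (3 * δ ^ 2 / (4 * K)) := by
        rw [show 6 * L ^ 2 + 4 * R ^ 2 = 2 * K by rw [hK_def]; ring]
        field_simp; ring
    _ ≤ exp (-(σ * t)) * (1 - t ^ 2 * R ^ 2 / 2 - exp (-(δ * t))) := by gcongr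
    _ = _ := by rw [hsplit]; ring

theorem univariate_cauchy_scale_separation_general
    (R lmin lmax : ℝ) (hlmin : 0 < lmin)
    (P P' : Measure ℝ) (hP : IsProbabilityMeasure P) (hP' : IsProbabilityMeasure P')
    (hPsupp : P (Set.Icc (-R) R)ᶜ = 0)
    (σ σ' : ℝ) (h₁ : lmin ≤ σ) (h₂ : σ ≤ σ') (h₃ : σ' ≤ lmax) :
    (σ' - σ) ^ 2 / (6 * lmax ^ 2 + 4 * R ^ 2) ≤
      ∫ x, |cauchyMix1 P σ x - cauchyMix1 P' σ' x| := by
  have hσ : 0 < σ := hlmin.trans_le h₁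
  have hσ' : 0 < σ' := hσ.trans_le h₂
  set t := (σ' - σ) / (3 * lmax ^ 2 + 2 * R ^ 2) with ht
  have ht0 : 0 ≤ t := div_nonneg (sub_nonneg.2 h₂) (by positivity)
  calc (σ' - σ) ^ 2 / (6 * lmax ^ 2 + 4 * R ^ 2)
      ≤ exp (-(σ * t)) * (1 - t ^ 2 * R ^ 2 / 2) - exp (-(σ' * t)) :=
        sub_sq_div_le_exp_mul_sub_exp hσ h₂ h₃ ht
    _ ≤ exp (-(σ * |t|)) * ∫ θ, cos (t * θ) ∂P - exp (-(σ' * |t|)) * ∫ θ, cos (t * θ) ∂P' := by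
        rw [abs_of_nonneg ht0]
        exact sub_le_sub
          (mul_le_mul_of_nonneg_left (one_sub_sq_mul_sq_div_two_le_integral_cos hPsupp t)
            (exp_pos _).le)
          (mul_le_of_le_one_right (exp_pos _).le (integral_cos_le_one t))
    _ ≤ _ := exp_mul_integral_cos_sub_le_integral_abs_sub hσ hσ' t

/-- Univariate Cauchy scale separation with an explicit constant. -/
theorem univariate_cauchy_scale_separation
    (R lmin lmax : ℝ) (hR : 0 < R) (hlmin : 0 < lmin) (hl : lmin < lmax)
    (P P' : Measure ℝ) (hP : IsProbabilityMeasure P) (hP' : IsProbabilityMeasure P')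
    (hPsupp : P (Set.Icc (-R) R)ᶜ = 0) (hP'supp : P' (Set.Icc (-R) R)ᶜ = 0)
    (σ σ' : ℝ) (h₁ : lmin ≤ σ) (h₂ : σ ≤ σ') (h₃ : σ' ≤ lmax) :
    (σ' - σ) ^ 2 / (6 * lmax ^ 2 + 4 * R ^ 2) ≤
      ∫ x, |cauchyMix1 P σ x - cauchyMix1 P' σ' x| :=
  univariate_cauchy_scale_separation_general R lmin lmax hlmin P P' hP hP' hPsupp σ σ' h₁ h₂ h₃
end
end

section
/- Let θ ∈ ℝ and σ > 0, let X be a real random variable with the Gaussian distribution N(θ, σ²) (mean θ, variance σ²), and let Z be an independent real random variable with the standard normal distribution N(0,1). Then for every integer n ≥ 0, the expectation of the complex random variable (X + iσZ)^n equals θ^n. Equivalently, defining the Hermite-type polynomial H_n(x; σ²) := E_{Z∼N(0,1)}[(x + iσZ)^n], one has ∫_ℝ H_n(x; σ²) · (2πσ²)^{−1/2} exp(−(x−θ)²/(2σ²)) dx = θ^n. -/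
open MeasureTheory ProbabilityTheory Complex Real

/-!
Write `X = θ + σ Y` with `Y` standard normal. Then `X + iσZ = θ + σ W` with `W = Y + iZ` a
standard Gaussian on `ℂ ≅ ℝ²`, whose law is invariant under rotations. Rotating by the angle
`π / k` gives `E[W ^ k] = -E[W ^ k]`, so every moment `E[W ^ k]` with `k ≥ 1` vanishes, and the
binomial expansion of `(θ + σ W) ^ n` leaves only `θ ^ n`.
-/

namespace ProbabilityTheory

lemma IsGaussian.integrable_const_add_mul_pow {μ : Measure ℂ} [IsGaussian μ] (c b : ℂ) (n : ℕ) :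
    Integrable (fun w ↦ (c + b * w) ^ n) μ := by
  have hLp : MemLp (fun w ↦ c + b * w) n μ :=
    (memLp_const c).add ((IsGaussian.memLp_id μ n (by simp)).const_mul b)
  refine (integrable_norm_iff (by fun_prop)).1 ?_
  simpa only [norm_pow] using hLp.integrable_norm_pow'

lemma integral_pow_stdGaussian_complex {k : ℕ} (hk : k ≠ 0) :
    ∫ w : ℂ, w ^ k ∂stdGaussian ℂ = 0 := by
  set a : Circle := Circle.exp (π / k)
  have ha : (a : ℂ) ^ k = -1 := by
    rw [Circle.coe_exp, ← Complex.exp_nat_mul]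
    convert Complex.exp_pi_mul_I using 2
    push_cast
    field_simp
  have hrot : ∫ w : ℂ, w ^ k ∂stdGaussian ℂ = (a : ℂ) ^ k * ∫ w : ℂ, w ^ k ∂stdGaussian ℂ := by
    conv_lhs => rw [← stdGaussian_map (rotation a)]
    rw [integral_map (by fun_prop) (by fun_prop)]
    simp only [rotation_apply, mul_pow, integral_const_mul]
  rw [ha] at hrot
  linear_combination hrot / 2

lemma integral_const_add_mul_pow_stdGaussian_complex (c b : ℂ) (n : ℕ) :
    ∫ w : ℂ, (c + b * w) ^ n ∂stdGaussian ℂ = c ^ n := by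
  simp_rw [add_comm c, add_pow]
  rw [integral_finsetSum _ fun m _ ↦ by
    simpa [mul_assoc] using 
      (IsGaussian.integrable_const_add_mul_pow 0 b m).mul_const (c ^ (n - m) * n.choose m)]
  rw [Finset.sum_eq_single 0]
  · simp
  · intro m _ hm
    simp [mul_pow, integral_mul_const, integral_const_mul, integral_pow_stdGaussian_complex hm]
  · simp

lemma stdGaussian_complex_eq_map_prod :
    stdGaussian ℂ = ((gaussianReal 0 1).prod (gaussianReal 0 1)).map (fun p ↦ p.1 + p.2 * I) := by
  rw [stdGaussian_eq_map_pi_orthonormalBasis Complex.orthonormalBasisOneI,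
    ← (measurePreserving_finTwoArrow _).map_eq, Measure.map_map (by fun_prop) (by fun_prop)]
  congr 1
  ext x
  simp [Fin.sum_univ_two, mul_comm]

lemma integral_integral_gaussianReal_eq_integral_stdGaussian {E : Type*} [NormedAddCommGroup E]
    [NormedSpace ℝ E] {f : ℂ → E} (hf : Integrable f (stdGaussian ℂ)) :
    ∫ y, ∫ z, f (y + z * I) ∂gaussianReal 0 1 ∂gaussianReal 0 1 = ∫ w, f w ∂stdGaussian ℂ := by
  rw [stdGaussian_complex_eq_map_prod] at hf ⊢
  rw [integral_map (by fun_prop) hf.1]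
  exact integral_integral ((integrable_map_measure hf.1 (by fun_prop)).1 hf)

lemma gaussianReal_eq_map_const_add_mul (μ σ : ℝ) :
    gaussianReal μ (σ ^ 2).toNNReal = (gaussianReal 0 1).map (fun y ↦ μ + σ * y) := by
  rw [show (fun y ↦ μ + σ * y) = (μ + ·) ∘ (σ * ·) from rfl,
    ← Measure.map_map (by fun_prop) (by fun_prop), gaussianReal_map_const_mul,
    gaussianReal_map_const_add]
  congr 1
  · ring
  · ext; simp [sq_nonneg]

end ProbabilityTheory

theorem hermite_gaussian_moment_identity_general
    (θ σ : ℝ) (n : ℕ) :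
    ∫ x : ℝ, (∫ z : ℝ, ((x : ℂ) + (σ : ℂ) * (z : ℂ) * Complex.I) ^ n ∂(gaussianReal 0 1))
      ∂(gaussianReal θ ((σ ^ 2).toNNReal)) = (θ : ℂ) ^ n := by
  have hH : StronglyMeasurable fun x : ℝ ↦
      ∫ z : ℝ, ((x : ℂ) + (σ : ℂ) * (z : ℂ) * Complex.I) ^ n ∂(gaussianReal 0 1) :=
    StronglyMeasurable.integral_prod_right (by fun_prop)
  rw [gaussianReal_eq_map_const_add_mul, integral_map (by fun_prop) hH.aestronglyMeasurable]
  calc _ = ∫ y : ℝ, ∫ z : ℝ, ((θ : ℂ) + σ * (y + z * I)) ^ n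
        ∂gaussianReal 0 1 ∂gaussianReal 0 1 := by
        congr 1 with y
        congr 1 with z
        push_cast
        ring
    _ = ∫ w : ℂ, ((θ : ℂ) + σ * w) ^ n ∂stdGaussian ℂ :=
        integral_integral_gaussianReal_eq_integral_stdGaussian
          (IsGaussian.integrable_const_add_mul_pow _ _ n)
    _ = (θ : ℂ) ^ n := integral_const_add_mul_pow_stdGaussian_complex _ _ n

/-- Lemma (Hermite polynomial identity): if X ∼ N(θ, σ²) and Z ∼ N(0,1) is
independent of X, then E[(X + iσZ)^n] = θ^n for every n ≥ 0.  The inner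
integral is the Hermite-type polynomial H_n(x; σ²) = E_Z[(x + iσZ)^n]. -/
theorem hermite_gaussian_moment_identity
    (θ σ : ℝ) (hσ : 0 < σ) (n : ℕ) :
    ∫ x : ℝ, (∫ z : ℝ, ((x : ℂ) + (σ : ℂ) * (z : ℂ) * Complex.I) ^ n ∂(gaussianReal 0 1))
      ∂(gaussianReal θ ((σ ^ 2).toNNReal)) = (θ : ℂ) ^ n :=
  hermite_gaussian_moment_identity_general θ σ n
end

section
/- Let σ, R, L be positive real numbers. Then: (a) ∫_{R+L}^{∞} exp(−(x−R)²/(2σ²)) dx ≤ √(π/2) · σ · exp(−L²/(2σ²)); (b) for every positive integer k, ∫_{R+L}^{∞} x^{2k} · exp(−(x−R)²/(2σ²)) dx ≤ 3^{2k−1} · exp(−L²/(2σ²)) · √(π/2) · σ · ( R^{2k} + L^{2k} + σ^{2k}·(2k−1)!! ). -/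
open MeasureTheory Real

noncomputable section

/-! Substitute `x = R + L + y` with `y ≥ 0`. Since `(y + L)² ≥ y² + L²`, the Gaussian factor is at
most `exp (-L²/2σ²) · exp (-y²/2σ²)`, and by convexity of `t ↦ t^{2k}` the polynomial factor is at
most `3^{2k-1} (R^{2k} + L^{2k} + y^{2k})`. What is left are the half-line Gaussian moments
`∫₀^∞ y^{2k} exp (-y²/2σ²) dy = √(π/2) σ^{2k+1} (2k-1)‼`, which are values of `Γ` at `k + 1/2`. -/

open Set
open scoped Nat

lemma add_add_pow_le_three_pow_mul {α : Type*} [Semiring α] [LinearOrder α] [IsStrictOrderedRing α]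
    [ExistsAddOfLE α] {a b c : α} (ha : 0 ≤ a) (hb : 0 ≤ b) (hc : 0 ≤ c) {n : ℕ} (hn : n ≠ 0) :
    (a + b + c) ^ n ≤ 3 ^ (n - 1) * (a ^ n + b ^ n + c ^ n) := by
  obtain ⟨m, rfl⟩ := Nat.exists_eq_add_one_of_ne_zero hn
  have h := pow_sum_le_card_mul_sum_pow (s := Finset.univ) (f := ![a, b, c])
    (by simp [Fin.forall_fin_succ, ha, hb, hc]) m
  simpa [Fin.sum_univ_three, add_assoc] using h

lemma exp_neg_add_sq_div_le {y L s : ℝ} (hy : 0 ≤ y) (hL : 0 ≤ L) (hs : 0 ≤ s) :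
    exp (-(y + L) ^ 2 / s) ≤ exp (-L ^ 2 / s) * exp (-y ^ 2 / s) := by
  rw [← exp_add, exp_le_exp, ← add_div]
  gcongr
  nlinarith [mul_nonneg hy hL]

section Translation

variable {E : Type*} [NormedAddCommGroup E]

lemma setIntegral_Ici_comp_sub [NormedSpace ℝ E] (f : ℝ → E) (c : ℝ) :
    ∫ x in Ici c, f (x - c) = ∫ y in Ici 0, f y := by
  have h := (measurePreserving_sub_right volume c).setIntegral_preimage_emb
    (measurableEmbedding_subRight c) f (Ici 0)
  rwa [preimage_sub_const_Ici, zero_add] at h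

lemma IntegrableOn.comp_sub_Ici {f : ℝ → E} (hf : IntegrableOn f (Ici 0)) (c : ℝ) :
    IntegrableOn (fun x => f (x - c)) (Ici c) := by
  rw [← (measurePreserving_sub_right volume c).integrableOn_comp_preimage
    (measurableEmbedding_subRight c), preimage_sub_const_Ici, zero_add] at hf
  exact hf

end Translation

lemma integrableOn_Ici_pow_mul_exp_neg_sq_div (n : ℕ) {s : ℝ} (hs : 0 < s) :
    IntegrableOn (fun y => y ^ n * exp (-y ^ 2 / s)) (Ici 0) := by
  rw [integrableOn_Ici_iff_integrableOn_Ioi]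
  refine (integrableOn_rpow_mul_exp_neg_mul_sq (inv_pos.2 hs)
    (by linarith [n.cast_nonneg (α := ℝ)] : (-1 : ℝ) < n)).congr_fun (fun y _ => ?_)
    measurableSet_Ioi
  simp only [rpow_natCast, neg_mul, div_eq_inv_mul, mul_neg]

lemma integral_Ici_pow_two_mul_mul_exp_neg_sq_div {σ : ℝ} (hσ : 0 < σ) (k : ℕ) :
    ∫ y in Ici 0, y ^ (2 * k) * exp (-y ^ 2 / (2 * σ ^ 2)) =
      √(π / 2) * σ ^ (2 * k + 1) * (2 * k - 1)‼ := by
  have hs : (0 : ℝ) < 2 * σ ^ 2 := by positivity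
  have hq : (-1 : ℝ) < (2 * k : ℕ) := by linarith [(2 * k).cast_nonneg (α := ℝ)]
  have hΓ := integral_rpow_mul_exp_neg_mul_rpow two_pos hq (inv_pos.2 hs)
  have hexp : (-((2 * k : ℕ) + 1) / 2 : ℝ) = -(k + 1 / 2) := by push_cast; ring
  have harg : (((2 * k : ℕ) + 1) / 2 : ℝ) = k + 1 / 2 := by push_cast; ring
  have hpow : (2 * σ ^ 2) ^ ((k : ℝ) + 1 / 2) = 2 ^ k * √2 * σ ^ (2 * k + 1) := by
    rw [rpow_add hs, rpow_natCast, ← sqrt_eq_rpow, sqrt_mul zero_le_two, sqrt_sq hσ.le]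
    ring
  rw [hexp, harg, Gamma_nat_add_half, inv_rpow hs.le, rpow_neg (by positivity), inv_inv, hpow]
    at hΓ
  rw [integral_Ici_eq_integral_Ioi]
  calc ∫ y in Ioi 0, y ^ (2 * k) * exp (-y ^ 2 / (2 * σ ^ 2))
      = ∫ y in Ioi 0, y ^ ((2 * k : ℕ) : ℝ) * exp (-(2 * σ ^ 2)⁻¹ * y ^ (2 : ℝ)) := by
        simp only [rpow_natCast, rpow_two, neg_mul, div_eq_inv_mul, mul_neg]
    _ = √(π / 2) * σ ^ (2 * k + 1) * (2 * k - 1)‼ := by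
        rw [hΓ, sqrt_div pi_pos.le]
        field_simp
        rw [sq_sqrt zero_le_two]

lemma integral_Ici_exp_neg_sq_div {σ : ℝ} (hσ : 0 < σ) :
    ∫ y in Ici 0, exp (-y ^ 2 / (2 * σ ^ 2)) = √(π / 2) * σ := by
  simpa using integral_Ici_pow_two_mul_mul_exp_neg_sq_div hσ 0

lemma integrableOn_Ici_add_pow_mul_exp_neg_sq_div (a : ℝ) (n : ℕ) {s : ℝ} (hs : 0 < s) :
    IntegrableOn (fun y => (a + y ^ n) * exp (-y ^ 2 / s)) (Ici 0) := by
  simp_rw [add_mul]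
  refine Integrable.add ?_ (integrableOn_Ici_pow_mul_exp_neg_sq_div n hs)
  simpa using (integrableOn_Ici_pow_mul_exp_neg_sq_div 0 hs).const_mul a

lemma integral_Ici_add_pow_two_mul_mul_exp_neg_sq_div {σ : ℝ} (hσ : 0 < σ) (a : ℝ) (k : ℕ) :
    ∫ y in Ici 0, (a + y ^ (2 * k)) * exp (-y ^ 2 / (2 * σ ^ 2)) =
      √(π / 2) * σ * (a + σ ^ (2 * k) * (2 * k - 1)‼) := by
  have hs : (0 : ℝ) < 2 * σ ^ 2 := by positivity
  simp_rw [add_mul]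
  rw [integral_add (by simpa using (integrableOn_Ici_pow_mul_exp_neg_sq_div 0 hs).const_mul a)
    (integrableOn_Ici_pow_mul_exp_neg_sq_div (2 * k) hs), integral_const_mul,
    integral_Ici_exp_neg_sq_div hσ, integral_Ici_pow_two_mul_mul_exp_neg_sq_div hσ]
  ring

lemma setIntegral_Ici_mul_exp_neg_sub_sq_div_le {f g : ℝ → ℝ} {R L s : ℝ} (hL : 0 ≤ L)
    (hs : 0 ≤ s) (hf : 0 ≤ f) (hfg : ∀ y, 0 ≤ y → f (R + L + y) ≤ g y)
    (hg : IntegrableOn (fun y => g y * exp (-y ^ 2 / s)) (Ici 0)) :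
    ∫ x in Ici (R + L), f x * exp (-(x - R) ^ 2 / s) ≤
      exp (-L ^ 2 / s) * ∫ y in Ici 0, g y * exp (-y ^ 2 / s) := by
  rw [← integral_const_mul, ← setIntegral_Ici_comp_sub _ (R + L)]
  refine integral_mono_of_nonneg (ae_of_all _ fun x => mul_nonneg (hf x) (exp_pos _).le)
    (IntegrableOn.comp_sub_Ici (hg.const_mul _) _) ((ae_restrict_iff' measurableSet_Ici).2 <|
      ae_of_all _ fun x hx => ?_)
  obtain ⟨y, hy, rfl⟩ : ∃ y, 0 ≤ y ∧ x = R + L + y := ⟨x - (R + L), by simpa using hx, by ring⟩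
  have hxR : R + L + y - R = y + L := by ring
  simp only [hxR, add_sub_cancel_left]
  calc f (R + L + y) * exp (-(y + L) ^ 2 / s)
      ≤ g y * (exp (-L ^ 2 / s) * exp (-y ^ 2 / s)) :=
        mul_le_mul (hfg y hy) (exp_neg_add_sq_div_le hy hL hs) (exp_pos _).le
          ((hf _).trans (hfg y hy))
    _ = exp (-L ^ 2 / s) * (g y * exp (-y ^ 2 / s)) := by ring

/-- Lemma B.6: Gaussian tail integral estimates. -/
theorem gaussian_tail_estimates (σ R L : ℝ) (hσ : 0 < σ) (hR : 0 < R) (hL : 0 < L) :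
    (∫ x in Set.Ici (R + L), Real.exp (-(x - R) ^ 2 / (2 * σ ^ 2)) ≤
        Real.sqrt (π / 2) * σ * Real.exp (-L ^ 2 / (2 * σ ^ 2))) ∧
    ∀ k : ℕ, 0 < k →
      ∫ x in Set.Ici (R + L), x ^ (2 * k) * Real.exp (-(x - R) ^ 2 / (2 * σ ^ 2)) ≤
        3 ^ (2 * k - 1) * Real.exp (-L ^ 2 / (2 * σ ^ 2)) * Real.sqrt (π / 2) * σ *
          (R ^ (2 * k) + L ^ (2 * k) + σ ^ (2 * k) * (Nat.doubleFactorial (2 * k - 1))) := by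
  have hs : (0 : ℝ) < 2 * σ ^ 2 := by positivity
  constructor
  · have htail := setIntegral_Ici_mul_exp_neg_sub_sq_div_le (f := 1) (g := 1) (R := R) hL.le hs.le
      zero_le_one (fun _ _ => le_rfl)
      (by simpa using integrableOn_Ici_pow_mul_exp_neg_sq_div 0 hs)
    simp only [Pi.one_apply, one_mul, integral_Ici_exp_neg_sq_div hσ] at htail
    linarith
  · intro k hk
    have htail := setIntegral_Ici_mul_exp_neg_sub_sq_div_le
      (g := fun y => 3 ^ (2 * k - 1) * (R ^ (2 * k) + L ^ (2 * k) + y ^ (2 * k))) hL.le hs.le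
      (fun x => (even_two_mul k).pow_nonneg x)
      (fun y hy => add_add_pow_le_three_pow_mul hR.le hL.le hy (by omega))
      (by simp_rw [mul_assoc]; exact (integrableOn_Ici_add_pow_mul_exp_neg_sq_div
        (R ^ (2 * k) + L ^ (2 * k)) (2 * k) hs).const_mul _)
    simp_rw [mul_assoc, integral_const_mul,
      integral_Ici_add_pow_two_mul_mul_exp_neg_sq_div hσ] at htail
    linarith
end
end

section
/- Let d ≥ 1 and let μ and ν be Borel probability measures on ℝ^d with finite first moments, i.e. ∫_{ℝ^d} ‖x‖ μ(dx) < ∞ and ∫_{ℝ^d} ‖x‖ ν(dx) < ∞. Then there exists a 1-Lipschitz function h* : ℝ^d → ℝ with h*(0) = 0 such that for every 1-Lipschitz function h : ℝ^d → ℝ, one has ∫ h dμ − ∫ h dν ≤ ∫ h* dμ − ∫ h* dν; that is, h* attains the supremum in the Kantorovich–Rubinstein dual formulation of the Wasserstein-1 distance between μ and ν. -/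
open MeasureTheory Filter

noncomputable section

lemma lip_abs_bound {d : ℕ} {h : Euc d → ℝ} (hl : LipschitzWith 1 h) (h0 : h 0 = 0)
    (x : Euc d) : |h x| ≤ ‖x‖ := by
  have := hl.dist_le_mul x 0
  simpa [h0, Real.dist_eq, abs_sub_comm] using this

lemma lip_integrable {d : ℕ} (μ : Measure (Euc d)) [IsProbabilityMeasure μ]
    (hμ : Integrable (fun x => ‖x‖) μ) {h : Euc d → ℝ} (hl : LipschitzWith 1 h) :
    Integrable h μ := by
  refine Integrable.mono' ((integrable_const (|h 0|)).add hμ)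
    hl.continuous.aestronglyMeasurable ?_
  filter_upwards with x
  have := hl.dist_le_mul x 0
  rw [Real.dist_eq] at this
  simp only [Real.norm_eq_abs]
  have h2 : |h x - h 0| ≤ ‖x‖ := by simpa using this
  calc |h x| = |h 0 + (h x - h 0)| := by ring_nf
    _ ≤ |h 0| + |h x - h 0| := abs_add_le _ _
    _ ≤ |h 0| + ‖x‖ := by linarith

/-- Lemma B.8: existence of an optimal Kantorovich potential for measures
with finite first moments. -/
theorem exists_kantorovich_potential
    (d : ℕ) (hd : 1 ≤ d) (μ ν : Measure (Euc d))
    [IsProbabilityMeasure μ] [IsProbabilityMeasure ν]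
    (hμ : Integrable (fun x => ‖x‖) μ) (hν : Integrable (fun x => ‖x‖) ν) :
    ∃ hstar : Euc d → ℝ, LipschitzWith 1 hstar ∧ hstar 0 = 0 ∧
      ∀ h : Euc d → ℝ, LipschitzWith 1 h →
        (∫ x, h x ∂μ) - ∫ x, h x ∂ν ≤ (∫ x, hstar x ∂μ) - ∫ x, hstar x ∂ν := by
  classical
  set S : Set ℝ := {c | ∃ h : Euc d → ℝ, LipschitzWith 1 h ∧ h 0 = 0 ∧
      c = (∫ x, h x ∂μ) - ∫ x, h x ∂ν} with hSdef
  have hne : S.Nonempty := by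
    refine ⟨0, fun _ => 0, (LipschitzWith.const 0).weaken zero_le_one, rfl, by simp⟩
  have hbdd : BddAbove S := by
    refine ⟨(∫ x, ‖x‖ ∂μ) + ∫ x, ‖x‖ ∂ν, ?_⟩
    rintro c ⟨h, hl, h0, rfl⟩
    have hintμ : Integrable h μ := lip_integrable μ hμ hl
    have hintν : Integrable h ν := lip_integrable ν hν hl
    have h1 : (∫ x, h x ∂μ) ≤ ∫ x, ‖x‖ ∂μ :=
      integral_mono hintμ hμ fun x => (le_abs_self _).trans (lip_abs_bound hl h0 x)
    have h2 : -(∫ x, ‖x‖ ∂ν) ≤ ∫ x, h x ∂ν := by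
      rw [← integral_neg]
      exact integral_mono hν.neg hintν fun x => by
        have := (lip_abs_bound hl h0 x)
        have := neg_abs_le (h x)
        linarith [lip_abs_bound hl h0 x, neg_abs_le (h x)]
    linarith
  obtain ⟨u, -, hu_tend, hu_mem⟩ := exists_seq_tendsto_sSup hne hbdd
  simp only [hSdef, Set.mem_setOf_eq] at hu_mem
  choose h hLip h0 hval using hu_mem
  have hbound : ∀ n x, |h n x| ≤ ‖x‖ := fun n x => lip_abs_bound (hLip n) (h0 n) x
  -- dense sequence
  have : Nonempty (Euc d) := ⟨0⟩
  let e : ℕ → Euc d := TopologicalSpace.denseSeq (Euc d)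
  have hede : DenseRange e := TopologicalSpace.denseRange_denseSeq (Euc d)
  -- compactness in the product space
  have hTc : IsCompact (Set.pi Set.univ fun k => Set.Icc (-‖e k‖) ‖e k‖) :=
    isCompact_univ_pi fun k => isCompact_Icc
  have hmem : ∀ n, (fun k => h n (e k)) ∈ (Set.pi Set.univ fun k => Set.Icc (-‖e k‖) ‖e k‖) :=
    fun n k _ => abs_le.1 (hbound n (e k))
  obtain ⟨g₀, -, φ, hφ, hconv⟩ := hTc.tendsto_subseq hmem
  rw [tendsto_pi_nhds] at hconv
  have hconv' : ∀ k, Tendsto (fun n => h (φ n) (e k)) atTop (nhds (g₀ k)) := hconv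
  -- pointwise convergence everywhere
  have key : ∀ x : Euc d, ∃ L, Tendsto (fun n => h (φ n) x) atTop (nhds L) := by
    intro x
    apply cauchySeq_tendsto_of_complete
    rw [Metric.cauchySeq_iff]
    intro ε hε
    obtain ⟨k, hk⟩ := hede.exists_dist_lt x (by positivity : (0:ℝ) < ε/4)
    obtain ⟨N, hN⟩ := Metric.cauchySeq_iff.1 (hconv' k).cauchySeq (ε/2) (by positivity)
    refine ⟨N, fun m hm n hn => ?_⟩
    calc dist (h (φ m) x) (h (φ n) x)
        ≤ dist (h (φ m) x) (h (φ m) (e k)) + dist (h (φ m) (e k)) (h (φ n) (e k))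
            + dist (h (φ n) (e k)) (h (φ n) x) := dist_triangle4 _ _ _ _
      _ ≤ dist x (e k) + dist (h (φ m) (e k)) (h (φ n) (e k)) + dist (e k) x := by
          gcongr
          · simpa using (hLip (φ m)).dist_le_mul x (e k)
          · simpa using (hLip (φ n)).dist_le_mul (e k) x
      _ < ε/4 + ε/2 + ε/4 := by
          have := hN m hm n hn
          rw [dist_comm (e k) x]
          gcongr
      _ = ε := by ring
  choose L hL using key
  refine ⟨L, ?_, ?_, ?_⟩
  · rw [lipschitzWith_iff_dist_le_mul]
    intro x y
    simp only [NNReal.coe_one, one_mul]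
    refine le_of_tendsto ((hL x).dist (hL y)) (Eventually.of_forall fun n => ?_)
    simpa using (hLip (φ n)).dist_le_mul x y
  · have := hL 0
    simp only [h0] at this
    exact tendsto_nhds_unique this tendsto_const_nhds
  · intro hh hhl
    have hintμ : Integrable hh μ := lip_integrable μ hμ hhl
    have hintν : Integrable hh ν := lip_integrable ν hν hhl
    set g : Euc d → ℝ := fun x => hh x - hh 0 with hgdef
    have hglip : LipschitzWith 1 g := by
      rw [lipschitzWith_iff_dist_le_mul]
      intro x y
      simp only [hgdef, Real.dist_eq, NNReal.coe_one, one_mul]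
      have := hhl.dist_le_mul x y
      rw [Real.dist_eq] at this
      calc |hh x - hh 0 - (hh y - hh 0)| = |hh x - hh y| := by ring_nf
        _ ≤ dist x y := by simpa using this
    have hg0 : g 0 = 0 := by simp [hgdef]
    have hgeq : (∫ x, g x ∂μ) - ∫ x, g x ∂ν = (∫ x, hh x ∂μ) - ∫ x, hh x ∂ν := by
      rw [hgdef]
      rw [integral_sub hintμ (integrable_const _), integral_sub hintν (integrable_const _)]
      simp [measure_univ]
    have hmemS : ((∫ x, g x ∂μ) - ∫ x, g x ∂ν) ∈ S := ⟨g, hglip, hg0, rfl⟩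
    have h1 : (∫ x, g x ∂μ) - ∫ x, g x ∂ν ≤ sSup S := le_csSup hbdd hmemS
    -- identify sSup S with value at L
    have tμ : Tendsto (fun n => ∫ x, h (φ n) x ∂μ) atTop (nhds (∫ x, L x ∂μ)) :=
      tendsto_integral_of_dominated_convergence (fun x => ‖x‖)
        (fun n => (hLip (φ n)).continuous.aestronglyMeasurable) hμ
        (fun n => Eventually.of_forall fun x => by
          simpa [Real.norm_eq_abs] using hbound (φ n) x)
        (Eventually.of_forall hL)
    have tν : Tendsto (fun n => ∫ x, h (φ n) x ∂ν) atTop (nhds (∫ x, L x ∂ν)) :=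
      tendsto_integral_of_dominated_convergence (fun x => ‖x‖)
        (fun n => (hLip (φ n)).continuous.aestronglyMeasurable) hν
        (fun n => Eventually.of_forall fun x => by
          simpa [Real.norm_eq_abs] using hbound (φ n) x)
        (Eventually.of_forall hL)
    have t2 : Tendsto (fun n => u (φ n)) atTop (nhds (sSup S)) :=
      hu_tend.comp hφ.tendsto_atTop
    have t3 : Tendsto (fun n => u (φ n)) atTop
        (nhds ((∫ x, L x ∂μ) - ∫ x, L x ∂ν)) := by
      have : (fun n => u (φ n)) =
          fun n => (∫ x, h (φ n) x ∂μ) - ∫ x, h (φ n) x ∂ν := by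
        funext n; exact hval (φ n)
      rw [this]
      exact tμ.sub tν
    have heq : sSup S = (∫ x, L x ∂μ) - ∫ x, L x ∂ν := tendsto_nhds_unique t2 t3
    linarith [hgeq ▸ h1, heq ▸ h1]
end
end
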